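/- Let n ≥ 1, let X and Y be n×n complex positive semidefinite matrices satisfying 0 ≤ X ≤ Y ≤ I in the Löwner order, and let α > 1 be a real number. Then ‖X Y^{α−1}‖₁ ≤ Tr Y^α. -/

import Mathlib

open Matrix
open scoped Kronecker ComplexOrder

noncomputable section

/-- Apply a real function to the spectrum of a Hermitian matrix via the spectral
(continuous functional) calculus; junk value `0` if the matrix is not Hermitian. -/
def matFun {n : Type*} [Fintype n] [DecidableEq n] (M : Matrix n n ℂ) (f : ℝ → ℝ) :
    Matrix n n ℂ :=
  if hM : M.IsHermitian then
    (hM.eigenvectorUnitary : Matrix n n ℂ) *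
      Matrix.diagonal (fun i => (f (hM.eigenvalues i) : ℂ)) *
        (star (hM.eigenvectorUnitary : Matrix n n ℂ))
  else 0

/-- Real (spectral) power of a matrix, with the convention `0 ^ β = 0` for `β ≠ 0`. -/
def matRpow {n : Type*} [Fintype n] [DecidableEq n] (M : Matrix n n ℂ) (β : ℝ) :
    Matrix n n ℂ :=
  matFun M (fun x => x ^ β)

/-- Trace norm (Schatten 1-norm): `‖M‖₁ = Tr √(Mᴴ M)`. -/
def traceNorm {n : Type*} [Fintype n] [DecidableEq n] (M : Matrix n n ℂ) : ℝ :=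
  ((((Matrix.posSemidef_conjTranspose_mul_self M).1.eigenvectorUnitary : Matrix n n ℂ) *
      Matrix.diagonal (((↑) : ℝ → ℂ) ∘ (√·) ∘ (Matrix.posSemidef_conjTranspose_mul_self M).1.eigenvalues) *
        (star ((Matrix.posSemidef_conjTranspose_mul_self M).1.eigenvectorUnitary :
          Matrix n n ℂ))).trace).re

/-- Operator norm of a matrix, acting on the Euclidean (ℓ²) space. -/
def opNorm {n : Type*} [Fintype n] [DecidableEq n] (M : Matrix n n ℂ) : ℝ :=
  ‖Matrix.toEuclideanCLM (𝕜 := ℂ) M‖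

/-- Partial trace over the second tensor factor. -/
def ptraceRight {ιA ιB : Type*} [Fintype ιB] (M : Matrix (ιA × ιB) (ιA × ιB) ℂ) :
    Matrix ιA ιA ℂ :=
  Matrix.of fun a a' => ∑ b : ιB, M (a, b) (a', b)

/-- Heisenberg time evolution `ρ(t) = e^{-iHt} ρ e^{iHt}`. -/
def timeEvol {n : Type*} [Fintype n] [DecidableEq n] (H ρ : Matrix n n ℂ) (t : ℝ) :
    Matrix n n ℂ :=
  NormedSpace.exp ((-(Complex.I * (t : ℂ))) • H) * ρ *
    NormedSpace.exp ((Complex.I * (t : ℂ)) • H)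

/-- Von Neumann entropy `S₁(σ) = -Tr(σ log σ)` (with the convention `0 log 0 = 0`). -/
def entVN {n : Type*} [Fintype n] [DecidableEq n] (σ : Matrix n n ℂ) : ℝ :=
  -((matFun σ (fun x => x * Real.log x)).trace.re)

/-- α-Renyi entropy `S_α(σ) = (1/(1-α)) log Tr σ^α`. -/
def renyiEnt {n : Type*} [Fintype n] [DecidableEq n] (α : ℝ) (σ : Matrix n n ℂ) : ℝ :=
  (1 - α)⁻¹ * Real.log ((matRpow σ α).trace.re)


/-!
Let `W` be the polar factor of `M = X Y^{α-1}`, so that `‖M‖₁ = Re Tr(W* M)` and `W` is a partial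
isometry: `W*W ≤ 1` and `WW* ≤ 1`. With `R = Y^{(α-1)/2}`, Cauchy–Schwarz for the semi-inner
product `⟨K, L⟩ = Tr(K* X L)` gives `2 Re Tr(W* X R²) ≤ Tr(R W* X W R) + Tr(R X R)`, and `X ≤ Y`
lets us replace `X` by `Y` in both terms. Then `Tr(R Y R) = Tr Y^α`, while if `C` is `W` written in
an eigenbasis of `Y`, the other term is `∑ |C_ij|² λ_i λ_j^{α-1}` with `(|C_ij|²)` doubly
substochastic, which Young's inequality bounds by `∑ λ_i^α`.
-/

section MatFun

variable {m : Type*} [Fintype m] [DecidableEq m] {A : Matrix m m ℂ}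

lemma matFun_of_isHermitian (hA : A.IsHermitian) (f : ℝ → ℝ) :
    matFun A f = (hA.eigenvectorUnitary : Matrix m m ℂ) *
      diagonal (fun i => (f (hA.eigenvalues i) : ℂ)) *
        star (hA.eigenvectorUnitary : Matrix m m ℂ) :=
  dif_pos hA

lemma matFun_mul (hA : A.IsHermitian) (f g : ℝ → ℝ) :
    matFun A f * matFun A g = matFun A (fun x => f x * g x) := by
  have hU : star (hA.eigenvectorUnitary : Matrix m m ℂ) * hA.eigenvectorUnitary = 1 :=
    Unitary.coe_star_mul_self _
  simp only [matFun_of_isHermitian hA, Matrix.mul_assoc]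
  rw [← Matrix.mul_assoc (star _), hU, Matrix.one_mul, ← Matrix.mul_assoc (diagonal _),
    diagonal_mul_diagonal]
  simp only [Complex.ofReal_mul]

lemma matFun_congr (hA : A.IsHermitian) {f g : ℝ → ℝ}
    (h : ∀ i, f (hA.eigenvalues i) = g (hA.eigenvalues i)) : matFun A f = matFun A g := by
  simp only [matFun_of_isHermitian hA, h]

lemma matFun_id (hA : A.IsHermitian) : matFun A (fun x => x) = A :=
  (matFun_of_isHermitian hA _).trans hA.spectral_theorem.symm

lemma isHermitian_matFun (hA : A.IsHermitian) (f : ℝ → ℝ) : (matFun A f).IsHermitian := by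
  rw [matFun_of_isHermitian hA, star_eq_conjTranspose]
  exact isHermitian_mul_mul_conjTranspose _ (isHermitian_diagonal_of_self_adjoint _
    (funext fun i => Complex.conj_ofReal _))

lemma isHermitian_matRpow (hA : A.IsHermitian) (b : ℝ) : (matRpow A b).IsHermitian :=
  isHermitian_matFun hA _

lemma trace_matFun (hA : A.IsHermitian) (f : ℝ → ℝ) :
    (matFun A f).trace = ∑ i, (f (hA.eigenvalues i) : ℂ) := by
  rw [matFun_of_isHermitian hA, trace_mul_cycle, Unitary.coe_star_mul_self, Matrix.one_mul,
    trace_diagonal]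

lemma matRpow_one (hA : A.IsHermitian) : matRpow A 1 = A := by
  simp only [matRpow, Real.rpow_one, matFun_id hA]

lemma matRpow_mul_matRpow (hA : A.PosSemidef) {b c : ℝ} (hbc : b + c ≠ 0) :
    matRpow A b * matRpow A c = matRpow A (b + c) := by
  rw [matRpow, matRpow, matRpow, matFun_mul hA.1]
  exact matFun_congr hA.1 fun i => (Real.rpow_add' (hA.eigenvalues_nonneg i) hbc).symm

end MatFun

section Trace

variable {m : Type*} [Fintype m]

lemma re_trace_conjTranspose_mul_mul_mono {S T : Matrix m m ℂ} (hST : (T - S).PosSemidef)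
    (B : Matrix m m ℂ) : (Bᴴ * S * B).trace.re ≤ (Bᴴ * T * B).trace.re := by
  have h := Complex.nonneg_iff.mp (hST.conjTranspose_mul_mul_same B).trace_nonneg
  rw [Matrix.mul_sub, Matrix.sub_mul, trace_sub, Complex.sub_re] at h
  linarith [h.1]

lemma two_mul_re_trace_le {X : Matrix m m ℂ} (hX : X.PosSemidef) (K L : Matrix m m ℂ) :
    2 * (Kᴴ * X * L).trace.re ≤ (Kᴴ * X * K).trace.re + (Lᴴ * X * L).trace.re := by
  have h := Complex.nonneg_iff.mp (hX.conjTranspose_mul_mul_same (K - L)).trace_nonneg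
  have hLK : (Lᴴ * X * K).trace.re = (Kᴴ * X * L).trace.re := by
    rw [← Complex.conj_re, ← RCLike.star_def, ← trace_conjTranspose]
    simp only [conjTranspose_mul, conjTranspose_conjTranspose, hX.1.eq, Matrix.mul_assoc]
  simp only [conjTranspose_sub, Matrix.sub_mul, Matrix.mul_sub, trace_sub, Complex.sub_re] at h
  linarith [h.1]

lemma trace_conjTranspose_mul_mul_mul {R : Matrix m m ℂ} (hR : R.IsHermitian)
    (W Z : Matrix m m ℂ) :
    ((W * R)ᴴ * Z * R).trace = (Wᴴ * Z * (R * R)).trace := by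
  rw [conjTranspose_mul, hR.eq, Matrix.mul_assoc, Matrix.mul_assoc, trace_mul_comm]
  simp only [Matrix.mul_assoc]

end Trace

section Projection

variable {m n : Type*} [Fintype m] [Fintype n]

lemma posSemidef_one_sub_of_isIdempotentElem [DecidableEq m] {P : Matrix m m ℂ}
    (hP : P.IsHermitian) (hPP : IsIdempotentElem P) : (1 - P).PosSemidef := by
  have h : (1 - P)ᴴ * (1 - P) = 1 - P := by
    rw [conjTranspose_sub, conjTranspose_one, hP.eq, Matrix.sub_mul, Matrix.mul_sub,
      Matrix.mul_sub, hPP.eq]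
    simp
  exact h ▸ posSemidef_conjTranspose_mul_self (1 - P)

lemma IsIdempotentElem.mul_conjTranspose_self [DecidableEq n] {W : Matrix m n ℂ}
    (hW : IsIdempotentElem (Wᴴ * W)) : IsIdempotentElem (W * Wᴴ) := by
  set P := Wᴴ * W with hP
  have hWP : W * (1 - P) = 0 := by
    have h : (W * (1 - P))ᴴ * (W * (1 - P)) = (1 - P) * P * (1 - P) := by
      simp only [conjTranspose_mul, conjTranspose_sub, conjTranspose_one,
        (isHermitian_conjTranspose_mul_self W).eq, hP, Matrix.mul_assoc]
    have hPP : P * P = P := hW.eq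
    rw [← conjTranspose_mul_self_eq_zero, h]
    simp only [Matrix.sub_mul, Matrix.mul_sub, Matrix.one_mul, Matrix.mul_one, hPP]
    abel
  have hWP' : W * P = W := by
    rw [Matrix.mul_sub, Matrix.mul_one, sub_eq_zero] at hWP
    exact hWP.symm
  rw [IsIdempotentElem, Matrix.mul_assoc, ← Matrix.mul_assoc Wᴴ, ← hP, ← Matrix.mul_assoc,
    hWP']

end Projection

section Polar

variable {m : Type*} [Fintype m] [DecidableEq m]

/-- As `0 ^ (-1/2) = 0` for `Real.rpow`, `(polarFactor M)ᴴ * polarFactor M` is the projection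
onto the range of `Mᴴ * M`, not `1`. -/
def polarFactor (M : Matrix m m ℂ) : Matrix m m ℂ :=
  M * matRpow (Mᴴ * M) (-(1 / 2))

lemma conjTranspose_polarFactor_mul (M : Matrix m m ℂ) :
    (polarFactor M)ᴴ * M = matRpow (Mᴴ * M) (1 / 2) := by
  have hN := posSemidef_conjTranspose_mul_self M
  rw [polarFactor, conjTranspose_mul, (isHermitian_matRpow hN.1 _).eq, Matrix.mul_assoc]
  nth_rw 2 [← matRpow_one hN.1]
  rw [matRpow_mul_matRpow hN (by norm_num)]
  norm_num

lemma traceNorm_eq_re_trace_conjTranspose_polarFactor_mul (M : Matrix m m ℂ) :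
    traceNorm M = ((polarFactor M)ᴴ * M).trace.re := by
  rw [conjTranspose_polarFactor_mul, matRpow, traceNorm,
    matFun_of_isHermitian (posSemidef_conjTranspose_mul_self M).1]
  simp only [Real.sqrt_eq_rpow]
  rfl

lemma isIdempotentElem_conjTranspose_polarFactor_mul_self (M : Matrix m m ℂ) :
    IsIdempotentElem ((polarFactor M)ᴴ * polarFactor M) := by
  have hN := posSemidef_conjTranspose_mul_self M
  have h : (polarFactor M)ᴴ * polarFactor M =
      matFun (Mᴴ * M) (fun x => x ^ (1 / 2 : ℝ) * x ^ (-(1 / 2) : ℝ)) := by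
    nth_rw 2 [polarFactor]
    rw [← Matrix.mul_assoc, conjTranspose_polarFactor_mul, matRpow, matRpow,
      matFun_mul hN.1]
  rw [IsIdempotentElem, h, matFun_mul hN.1]
  refine matFun_congr hN.1 fun i => ?_
  rcases (hN.eigenvalues_nonneg i).eq_or_lt with h0 | h0
  · simp [← h0]
  · rw [← Real.rpow_add h0]
    simp

lemma posSemidef_one_sub_conjTranspose_polarFactor_mul_self (M : Matrix m m ℂ) :
    (1 - (polarFactor M)ᴴ * polarFactor M).PosSemidef :=
  posSemidef_one_sub_of_isIdempotentElem (isHermitian_conjTranspose_mul_self _)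
    (isIdempotentElem_conjTranspose_polarFactor_mul_self M)

lemma posSemidef_one_sub_polarFactor_mul_conjTranspose_self (M : Matrix m m ℂ) :
    (1 - polarFactor M * (polarFactor M)ᴴ).PosSemidef :=
  posSemidef_one_sub_of_isIdempotentElem (isHermitian_mul_conjTranspose_self _)
    (isIdempotentElem_conjTranspose_polarFactor_mul_self M).mul_conjTranspose_self

end Polar

lemma sum_mul_mul_rpow_sub_one_le {ι : Type*} [Fintype ι] {S : ι → ι → ℝ}
    (hS : ∀ i j, 0 ≤ S i j) (hrow : ∀ i, ∑ j, S i j ≤ 1) (hcol : ∀ j, ∑ i, S i j ≤ 1)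
    {x : ι → ℝ} (hx : ∀ i, 0 ≤ x i) {p : ℝ} (hp : 1 < p) :
    ∑ i, ∑ j, S i j * (x i * x j ^ (p - 1)) ≤ ∑ i, x i ^ p := by
  have hp0 : 0 < p := by linarith
  have hw : 0 ≤ 1 - p⁻¹ := sub_nonneg.mpr (inv_le_one_of_one_le₀ hp.le)
  have young : ∀ i j, x i * x j ^ (p - 1) ≤ p⁻¹ * x i ^ p + (1 - p⁻¹) * x j ^ p := by
    intro i j
    have h := Real.geom_mean_le_arith_mean2_weighted (inv_nonneg.mpr hp0.le) hw
      (Real.rpow_nonneg (hx i) p) (Real.rpow_nonneg (hx j) p) (add_sub_cancel _ _)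
    rwa [Real.rpow_rpow_inv (hx i) hp0.ne', ← Real.rpow_mul (hx j),
      show p * (1 - p⁻¹) = p - 1 by field_simp] at h
  calc ∑ i, ∑ j, S i j * (x i * x j ^ (p - 1))
      ≤ ∑ i, ∑ j, S i j * (p⁻¹ * x i ^ p + (1 - p⁻¹) * x j ^ p) :=
        Finset.sum_le_sum fun i _ => Finset.sum_le_sum fun j _ =>
          mul_le_mul_of_nonneg_left (young i j) (hS i j)
    _ = p⁻¹ * ∑ i, x i ^ p * ∑ j, S i j + (1 - p⁻¹) * ∑ j, x j ^ p * ∑ i, S i j := by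
        simp only [mul_add, Finset.sum_add_distrib, Finset.mul_sum]
        rw [Finset.sum_comm (f := fun i j => S i j * ((1 - p⁻¹) * x j ^ p))]
        congr 1 <;>
          exact Finset.sum_congr rfl fun _ _ => Finset.sum_congr rfl fun _ _ => by ring
    _ ≤ p⁻¹ * ∑ i, x i ^ p + (1 - p⁻¹) * ∑ j, x j ^ p := by
        gcongr with i _ j _
        · exact mul_le_of_le_one_right (Real.rpow_nonneg (hx i) p) (hrow i)
        · exact mul_le_of_le_one_right (Real.rpow_nonneg (hx j) p) (hcol j)
    _ = ∑ i, x i ^ p := by ring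

section Contraction

variable {m : Type*} [Fintype m] [DecidableEq m]

lemma sum_normSq_le_one_of_posSemidef_one_sub {C : Matrix m m ℂ}
    (hC : (1 - C * Cᴴ).PosSemidef) (i : m) : ∑ j, Complex.normSq (C i j) ≤ 1 := by
  have h := (Complex.nonneg_iff.mp (hC.diag_nonneg (i := i))).1
  simp only [Matrix.sub_apply, one_apply_eq, mul_apply, conjTranspose_apply, Complex.sub_re,
    Complex.one_re, Complex.re_sum, RCLike.star_def, Complex.mul_conj, Complex.ofReal_re] at h
  linarith

lemma re_trace_conjTranspose_mul_diagonal_mul_mul_diagonal (C : Matrix m m ℂ) (a b : m → ℝ) :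
    (Cᴴ * diagonal (fun i => (a i : ℂ)) * C * diagonal (fun j => (b j : ℂ))).trace.re =
      ∑ i, ∑ j, Complex.normSq (C i j) * (a i * b j) := by
  rw [Matrix.mul_assoc Cᴴ]
  simp only [trace, diag_apply, mul_diagonal]
  simp only [mul_apply, diagonal_apply, ite_mul, zero_mul, Finset.sum_ite_eq, Finset.mem_univ,
    if_true, conjTranspose_apply, Finset.sum_mul, Complex.re_sum]
  rw [Finset.sum_comm]
  refine Finset.sum_congr rfl fun i _ => Finset.sum_congr rfl fun j _ => ?_
  rw [RCLike.star_def, ← Complex.ofReal_re (Complex.normSq _ * _), Complex.ofReal_mul,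
    Complex.normSq_eq_conj_mul_self]
  push_cast
  ring_nf

lemma re_trace_conjTranspose_mul_mul_mul_matRpow_sub_one_le {Y W : Matrix m m ℂ}
    (hY : Y.PosSemidef) (hW : (1 - Wᴴ * W).PosSemidef) (hW' : (1 - W * Wᴴ).PosSemidef)
    {p : ℝ} (hp : 1 < p) :
    (Wᴴ * Y * W * matRpow Y (p - 1)).trace.re ≤ (matRpow Y p).trace.re := by
  set U : Matrix m m ℂ := ↑hY.1.eigenvectorUnitary
  set C := Uᴴ * W * U
  have hUU : Uᴴ * U = 1 := Unitary.coe_star_mul_self _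
  have hUU' : U * Uᴴ = 1 := Unitary.coe_mul_star_self _
  have hconj : ∀ Z : Matrix m m ℂ, (1 - Z).PosSemidef → (1 - Uᴴ * Z * U).PosSemidef := by
    intro Z hZ
    simpa [Matrix.mul_sub, Matrix.sub_mul, hUU] using hZ.conjTranspose_mul_mul_same U
  have hCC : (1 - Cᴴ * C).PosSemidef := by
    convert hconj _ hW using 2
    simp only [C, conjTranspose_mul, conjTranspose_conjTranspose, Matrix.mul_assoc]
    rw [← Matrix.mul_assoc U, hUU', Matrix.one_mul]
  have hCC' : (1 - C * Cᴴ).PosSemidef := by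
    convert hconj _ hW' using 2
    simp only [C, conjTranspose_mul, conjTranspose_conjTranspose, Matrix.mul_assoc]
    rw [← Matrix.mul_assoc U, hUU', Matrix.one_mul]
  have htrace : Wᴴ * Y * W * matRpow Y (p - 1) = U * (Cᴴ * diagonal
      (fun i => (hY.1.eigenvalues i : ℂ)) * C * diagonal
        (fun j => ((hY.1.eigenvalues j ^ (p - 1) : ℝ) : ℂ))) * Uᴴ := by
    have hYU : Y = U * diagonal (fun i => (hY.1.eigenvalues i : ℂ)) * Uᴴ :=
      (matFun_id hY.1).symm.trans (matFun_of_isHermitian hY.1 _)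
    rw [matRpow, matFun_of_isHermitian hY.1]
    nth_rw 1 [hYU]
    simp only [C, conjTranspose_mul, conjTranspose_conjTranspose, Matrix.mul_assoc]
    rw [← Matrix.mul_assoc U Uᴴ, hUU', Matrix.one_mul]
    rfl
  rw [htrace, trace_mul_cycle, hUU, Matrix.one_mul,
    re_trace_conjTranspose_mul_diagonal_mul_mul_diagonal, matRpow, trace_matFun hY.1,
    ← Complex.ofReal_sum, Complex.ofReal_re]
  refine sum_mul_mul_rpow_sub_one_le (fun i j => Complex.normSq_nonneg _)
    (sum_normSq_le_one_of_posSemidef_one_sub hCC') (fun j => ?_) hY.eigenvalues_nonneg hp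
  simpa using sum_normSq_le_one_of_posSemidef_one_sub (C := Cᴴ) (by simpa using hCC) j

end Contraction

theorem stmt_0_general (n : ℕ) (X Y : Matrix (Fin n) (Fin n) ℂ)
    (hX : X.PosSemidef) (hY : Y.PosSemidef)
    (hXY : (Y - X).PosSemidef)
    (α : ℝ) (hα : 1 < α) :
    traceNorm (X * matRpow Y (α - 1)) ≤ ((matRpow Y α).trace).re := by
  set W := polarFactor (X * matRpow Y (α - 1))
  set R := matRpow Y ((α - 1) / 2)
  have hR : R.IsHermitian := isHermitian_matRpow hY.1 _
  have hRR : R * R = matRpow Y (α - 1) := by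
    rw [matRpow_mul_matRpow hY (by linarith), add_halves]
  have hRYR : R * Y * R = matRpow Y α := by
    calc R * Y * R = R * matRpow Y 1 * R := by rw [matRpow_one hY.1]
      _ = matRpow Y α := by
        rw [matRpow_mul_matRpow hY (by linarith), matRpow_mul_matRpow hY (by linarith)]
        ring_nf
  have hWR : ((W * R)ᴴ * X * (W * R)).trace.re ≤ (matRpow Y α).trace.re :=
    calc ((W * R)ᴴ * X * (W * R)).trace.re ≤ ((W * R)ᴴ * (Y * W) * R).trace.re := by
          simpa only [Matrix.mul_assoc] using re_trace_conjTranspose_mul_mul_mono hXY (W * R)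
      _ ≤ (matRpow Y α).trace.re := by
          rw [trace_conjTranspose_mul_mul_mul hR, hRR, ← Matrix.mul_assoc]
          exact re_trace_conjTranspose_mul_mul_mul_matRpow_sub_one_le hY
            (posSemidef_one_sub_conjTranspose_polarFactor_mul_self _)
            (posSemidef_one_sub_polarFactor_mul_conjTranspose_self _) hα
  have hR' : (Rᴴ * X * R).trace.re ≤ (matRpow Y α).trace.re := by
    simpa only [hR.eq, hRYR] using re_trace_conjTranspose_mul_mul_mono hXY R
  calc traceNorm (X * matRpow Y (α - 1)) = ((W * R)ᴴ * X * R).trace.re := by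
        rw [traceNorm_eq_re_trace_conjTranspose_polarFactor_mul,
          trace_conjTranspose_mul_mul_mul hR, hRR, Matrix.mul_assoc]
    _ ≤ (matRpow Y α).trace.re := by linarith [two_mul_re_trace_le hX (W * R) R]

/-- If `0 ≤ X ≤ Y ≤ I` are `n × n` complex positive semidefinite matrices
and `α > 1`, then `‖X Y^{α-1}‖₁ ≤ Tr Y^α`. -/
theorem stmt_0 (n : ℕ) (hn : 1 ≤ n) (X Y : Matrix (Fin n) (Fin n) ℂ)
    (hX : X.PosSemidef) (hY : Y.PosSemidef)
    (hXY : (Y - X).PosSemidef) (hYI : ((1 : Matrix (Fin n) (Fin n) ℂ) - Y).PosSemidef)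
    (α : ℝ) (hα : 1 < α) :
    traceNorm (X * matRpow Y (α - 1)) ≤ ((matRpow Y α).trace).re :=
  stmt_0_general n X Y hX hY hXY α hα
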